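/- In the gauged complex scalar field model: on M₁ with coordinates (x^μ, φ^a, a_μ, e, p^μ_a, p^{μν}) (p^{μν} = −p^{νμ}), with Ω₁ = de∧ω + dp^μ_a ∧ dφ^a ∧ ω_μ − (da_λ ∧ dx^λ) ∧ (½ dp^{μν} ∧ ω_{μν}) and Hamiltonian H₁ = e + ½η_{μν}(p^μ_1 p^ν_1 + p^μ_2 p^ν_2) + (p^μ_1 φ² − p^μ_2 φ¹)a_μ − ¼η_{μλ}η_{νσ}p^{μν}p^{λσ} − V(|φ|²/2), for any smooth function ψ of x the (n−1)-form F₁ = ψ(x)(p^μ_1 φ² − p^μ_2 φ¹)ω_μ − ½ p^{μν} dψ ∧ ω_{μν} satisfies dF₁ = −ξ₁ ⌟ Ω₁ with ξ₁ = ψ j⃗₀ − (p^μ_1 φ² − p^μ_2 φ¹)(∂ψ/∂x^μ) ∂_e + (∂ψ/∂x^μ) ∂_{a_μ}, and dH₁(ξ₁) = 0. Hence F₁ is a dynamical algebraic observable (n−1)-form for every smearing function ψ. -/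

import Mathlib

open scoped BigOperators

namespace Stmt17

/-- The (de Donder–Weyl) multisymplectic phase space of the gauged complex scalar field
over `ℝ^{n+2}`, with coordinates `(x^μ, (φ¹,φ²), a_μ, e, (p^μ_1, p^μ_2), p^{μν})`. -/
abbrev E (n : ℕ) : Type :=
  (Fin (n + 2) → ℝ) × (ℝ × ℝ) × (Fin (n + 2) → ℝ) × ℝ ×
    ((Fin (n + 2) → ℝ) × (Fin (n + 2) → ℝ)) × (Fin (n + 2) → Fin (n + 2) → ℝ)

variable {n : ℕ}

def xc (w : E n) : Fin (n + 2) → ℝ := w.1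
def phi1 (w : E n) : ℝ := w.2.1.1
def phi2 (w : E n) : ℝ := w.2.1.2
def ac (w : E n) : Fin (n + 2) → ℝ := w.2.2.1
def ec (w : E n) : ℝ := w.2.2.2.1
def pc1 (w : E n) : Fin (n + 2) → ℝ := w.2.2.2.2.1.1
def pc2 (w : E n) : Fin (n + 2) → ℝ := w.2.2.2.2.1.2
def Pc (w : E n) : Fin (n + 2) → Fin (n + 2) → ℝ := w.2.2.2.2.2

/-- The volume form `ω = dx¹ ∧ ⋯ ∧ dxⁿ`. -/
noncomputable def vol (v : Fin (n + 2) → E n) : ℝ :=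
  Matrix.det (Matrix.of fun i j : Fin (n + 2) => xc (v j) i)

/-- The coordinate vector `∂/∂x^μ`. -/
def eVec (μ : Fin (n + 2)) : E n := (Pi.single μ 1, (0, 0), 0, 0, (0, 0), 0)

/-- `ω_μ = ∂_μ ⌟ ω`. -/
noncomputable def volMu (μ : Fin (n + 2)) (v : Fin (n + 1) → E n) : ℝ :=
  vol (Fin.cons (eVec μ) v)

/-- `ω_{μν} = ∂_μ ∧ ∂_ν ⌟ ω`. -/
noncomputable def volMuNu (μ ν : Fin (n + 2)) (v : Fin n → E n) : ℝ :=
  vol (Fin.cons (eVec μ) (Fin.cons (eVec ν) v))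

/-- Wedge of a `1`-form with a `k`-form. -/
noncomputable def wedge1 {k : ℕ} (α : E n → ℝ) (δ : (Fin k → E n) → ℝ)
    (w : Fin (k + 1) → E n) : ℝ :=
  ∑ i : Fin (k + 1), (-1 : ℝ) ^ (i : ℕ) * α (w i) * δ (w ∘ i.succAbove)

/-- The multisymplectic form
`Ω₁ = de ∧ ω + dp^μ_a ∧ dφ^a ∧ ω_μ - (da_λ ∧ dx^λ) ∧ (½ dp^{μν} ∧ ω_{μν})`. -/
noncomputable def Omega1 (w : Fin (n + 3) → E n) : ℝ :=
  wedge1 ec vol w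
  + ∑ μ : Fin (n + 2),
      (wedge1 (fun u => pc1 u μ) (wedge1 phi1 (volMu μ)) w
        + wedge1 (fun u => pc2 u μ) (wedge1 phi2 (volMu μ)) w)
  - ∑ l : Fin (n + 2), ∑ μ : Fin (n + 2), ∑ ν : Fin (n + 2),
      (1 / 2) *
        wedge1 (fun u => ac u l)
          (wedge1 (fun u => xc u l) (wedge1 (fun u => Pc u μ ν) (volMuNu μ ν))) w

/-- The exterior derivative of an unbundled `k`-form. -/
noncomputable def extDeriv {k : ℕ} (ω : E n → (Fin k → E n) → ℝ) (x : E n)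
    (v : Fin (k + 1) → E n) : ℝ :=
  ∑ i : Fin (k + 1), (-1 : ℝ) ^ (i : ℕ) * fderiv ℝ (fun y => ω y (v ∘ i.succAbove)) x (v i)

/-- The smeared-charge `(n-1)`-form
`F₁ = ψ(x)(p^μ_1φ² - p^μ_2φ¹) ω_μ - ½ p^{μν} dψ ∧ ω_{μν}`. -/
noncomputable def F1 (ψ : (Fin (n + 2) → ℝ) → ℝ) (m : E n) (v : Fin (n + 1) → E n) : ℝ :=
  ψ (xc m) * ∑ μ : Fin (n + 2), (pc1 m μ * phi2 m - pc2 m μ * phi1 m) * volMu μ v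
    - (1 / 2) * ∑ μ : Fin (n + 2), ∑ ν : Fin (n + 2),
        Pc m μ ν * wedge1 (fun u => fderiv ℝ ψ (xc m) (xc u)) (volMuNu μ ν) v

/-- The vector field
`ξ₁ = ψ j⃗₀ - (p^μ_1φ² - p^μ_2φ¹)(∂ψ/∂x^μ) ∂_e + (∂ψ/∂x^μ) ∂_{a_μ}`. -/
noncomputable def xi1 (ψ : (Fin (n + 2) → ℝ) → ℝ) (m : E n) : E n :=
  (0,
   (ψ (xc m) * phi2 m, -(ψ (xc m) * phi1 m)),
   fun μ => fderiv ℝ ψ (xc m) (Pi.single μ 1),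
   -(∑ μ : Fin (n + 2),
      (pc1 m μ * phi2 m - pc2 m μ * phi1 m) * fderiv ℝ ψ (xc m) (Pi.single μ 1)),
   (fun μ => ψ (xc m) * pc2 m μ, fun μ => -(ψ (xc m) * pc1 m μ)),
   0)

/-- The Yang–Mills–Higgs-type Hamiltonian of the gauged complex scalar field. -/
noncomputable def H1 (η : Fin (n + 2) → Fin (n + 2) → ℝ) (V : ℝ → ℝ) (m : E n) : ℝ :=
  ec m
    + (1 / 2) * ∑ μ : Fin (n + 2), ∑ ν : Fin (n + 2),
        η μ ν * (pc1 m μ * pc1 m ν + pc2 m μ * pc2 m ν)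
    + ∑ μ : Fin (n + 2), (pc1 m μ * phi2 m - pc2 m μ * phi1 m) * ac m μ
    - (1 / 4) * ∑ μ : Fin (n + 2), ∑ ν : Fin (n + 2), ∑ l : Fin (n + 2), ∑ σ : Fin (n + 2),
        η μ l * η ν σ * Pc m μ ν * Pc m l σ
    - V ((phi1 m ^ 2 + phi2 m ^ 2) / 2)

section Toolkit
variable {n : ℕ}

lemma wedge1_cons {k : ℕ} (α : E n → ℝ) (δ : (Fin (k + 1) → E n) → ℝ) (b : E n)
    (v : Fin (k + 1) → E n) :
    wedge1 α δ (Fin.cons b v) = α b * δ v - wedge1 α (fun u => δ (Fin.cons b u)) v := by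
  unfold wedge1
  rw [Fin.sum_univ_succ]
  have h0 : (Fin.cons b v : Fin (k+2) → E n) ∘ (Fin.succAbove 0) = v := by
    funext j; simp [Fin.succAbove_zero]
  have hs : ∀ i : Fin (k+1), (Fin.cons b v : Fin (k+2) → E n) ∘ (Fin.succAbove i.succ)
      = Fin.cons b (v ∘ i.succAbove) := by
    intro i; funext j
    cases j using Fin.cases with
    | zero => simp
    | succ j => simp [Fin.succ_succAbove_succ]
  simp only [h0, hs, Fin.cons_zero, Fin.cons_succ, Fin.val_zero, pow_zero, one_mul,
    Fin.val_succ]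
  rw [sub_eq_add_neg, ← Finset.sum_neg_distrib]
  congr 1
  refine Finset.sum_congr rfl fun i _ => by ring

lemma wedge1_sum_left {k : ℕ} {ι : Type*} (s : Finset ι) (c : ι → ℝ) (β : ι → E n → ℝ)
    (δ : (Fin k → E n) → ℝ) (w : Fin (k + 1) → E n) :
    wedge1 (fun u => ∑ l ∈ s, c l * β l u) δ w = ∑ l ∈ s, c l * wedge1 (β l) δ w := by
  unfold wedge1
  simp only [Finset.mul_sum, Finset.sum_mul]
  rw [Finset.sum_comm]
  exact Finset.sum_congr rfl fun l _ => Finset.sum_congr rfl fun i _ => by ring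

lemma wedge1_congr_left {k : ℕ} {α α' : E n → ℝ} (h : ∀ u, α u = α' u)
    (δ : (Fin k → E n) → ℝ) (w : Fin (k + 1) → E n) :
    wedge1 α δ w = wedge1 α' δ w := by
  unfold wedge1; exact Finset.sum_congr rfl fun i _ => by rw [h]

lemma wedge1_congr_right {k : ℕ} (α : E n → ℝ) {δ δ' : (Fin k → E n) → ℝ}
    (h : ∀ u, δ u = δ' u) (w : Fin (k + 1) → E n) :
    wedge1 α δ w = wedge1 α δ' w := by
  unfold wedge1; exact Finset.sum_congr rfl fun i _ => by rw [h]

lemma wedge1_zero_right {k : ℕ} (α : E n → ℝ) (w : Fin (k + 1) → E n) :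
    wedge1 α (fun _ => (0:ℝ)) w = 0 := by
  unfold wedge1; simp

lemma wedge1_sub_right {k : ℕ} (α : E n → ℝ) (δ δ' : (Fin k → E n) → ℝ)
    (w : Fin (k + 1) → E n) :
    wedge1 α (fun u => δ u - δ' u) w = wedge1 α δ w - wedge1 α δ' w := by
  unfold wedge1
  rw [← Finset.sum_sub_distrib]
  refine Finset.sum_congr rfl fun i _ => by ring

lemma wedge1_const_mul_right {k : ℕ} (c : ℝ) (α : E n → ℝ) (δ : (Fin k → E n) → ℝ)
    (w : Fin (k + 1) → E n) :
    wedge1 α (fun u => c * δ u) w = c * wedge1 α δ w := by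
  unfold wedge1
  rw [Finset.mul_sum]
  refine Finset.sum_congr rfl fun i _ => by ring

lemma wedge1_sum_right {k : ℕ} {ι : Type*} (s : Finset ι) (α : E n → ℝ) (c : ι → ℝ)
    (δ : ι → (Fin k → E n) → ℝ) (w : Fin (k + 1) → E n) :
    wedge1 α (fun u => ∑ l ∈ s, c l * δ l u) w = ∑ l ∈ s, c l * wedge1 α (δ l) w := by
  unfold wedge1
  simp only [Finset.mul_sum, Finset.sum_mul]
  rw [Finset.sum_comm]
  exact Finset.sum_congr rfl fun l _ => Finset.sum_congr rfl fun i _ => by ring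

/-- Antisymmetry of double wedge with arbitrary core form. -/
lemma wedge1_swap {k : ℕ} (α β : E n → ℝ) (δ : (Fin k → E n) → ℝ)
    (w : Fin (k + 2) → E n) :
    wedge1 α (wedge1 β δ) w = - wedge1 β (wedge1 α δ) w := by
  induction k with
  | zero =>
      have he : ∀ g : Fin 0 → E n, δ g = δ (fun i => i.elim0) := fun g =>
        congrArg δ (Subsingleton.elim _ _)
      unfold wedge1
      simp only [Fin.sum_univ_succ, Fin.sum_univ_zero, add_zero, he, Function.comp_apply,
        Fin.succAbove_zero, Fin.succ_succAbove_zero, Fin.val_succ, Fin.val_zero, pow_zero,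
        pow_succ, pow_one]
      ring
  | succ k ih =>
      have hw : w = Fin.cons (w 0) (Fin.tail w) := (Fin.cons_self_tail w).symm
      rw [hw]
      rw [wedge1_cons, wedge1_cons]
      rw [wedge1_congr_right α (fun u => wedge1_cons β δ (w 0) u) (Fin.tail w),
          wedge1_congr_right β (fun u => wedge1_cons α δ (w 0) u) (Fin.tail w)]
      rw [wedge1_sub_right, wedge1_sub_right]
      rw [wedge1_const_mul_right, wedge1_const_mul_right]
      rw [ih (fun u => δ (Fin.cons (w 0) u)) (Fin.tail w)]
      ring

end Toolkit
section Toolkit2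
variable {n : ℕ}

lemma wedge1_det {k : ℕ} (α : E n → ℝ) (ρ : Fin k → E n → ℝ) (w : Fin (k + 1) → E n) :
    wedge1 α (fun u => Matrix.det (Matrix.of fun i j => ρ i (u j))) w
      = Matrix.det (Matrix.of fun i j => (Fin.cons α ρ : Fin (k+1) → E n → ℝ) i (w j)) := by
  rw [Matrix.det_succ_row_zero]
  unfold wedge1
  refine Finset.sum_congr rfl fun j _ => ?_
  have h1 : (Matrix.of fun i j => (Fin.cons α ρ : Fin (k+1) → E n → ℝ) i (w j)) 0 j
      = α (w j) := by simp
  have h2 : ((Matrix.of fun i j => (Fin.cons α ρ : Fin (k+1) → E n → ℝ) i (w j)).submatrix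
        Fin.succ j.succAbove)
      = Matrix.of (fun i j' => ρ i (w (j.succAbove j'))) := by
    ext i j'
    simp
  rw [h1, h2]
  rfl

lemma wedge1_coord_vol (l : Fin (n + 2)) (w : Fin (n + 3) → E n) :
    wedge1 (fun u => xc u l) vol w = 0 := by
  have h := wedge1_det (n := n) (fun u => xc u l)
    (fun (i : Fin (n+2)) (u : E n) => xc u i) w
  exact h.trans (Matrix.det_zero_of_row_eq (Fin.succ_ne_zero l).symm rfl)

lemma wedge1_lin_vol (L : (Fin (n + 2) → ℝ) →ₗ[ℝ] ℝ) (w : Fin (n + 3) → E n) :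
    wedge1 (fun u => L (xc u)) vol w = 0 := by
  have hL : ∀ u : E n, L (xc u)
      = ∑ l : Fin (n + 2), L (fun j => if l = j then 1 else 0) * xc u l := by
    intro u
    rw [LinearMap.pi_apply_eq_sum_univ L (xc u)]
    exact Finset.sum_congr rfl fun l _ => by rw [smul_eq_mul, mul_comm]
  rw [wedge1_congr_left hL, wedge1_sum_left]
  simp [wedge1_coord_vol]

lemma vol_cons_xzero (b : E n) (hb : xc b = 0) (u : Fin (n + 1) → E n) :
    vol (Fin.cons b u) = 0 := by
  apply Matrix.det_eq_zero_of_column_eq_zero 0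
  intro i
  simp [vol, hb]

lemma wedge1_lin_volMu (L : (Fin (n + 2) → ℝ) →ₗ[ℝ] ℝ) (μ : Fin (n + 2))
    (v : Fin (n + 2) → E n) :
    wedge1 (fun u => L (xc u)) (volMu μ) v = L (Pi.single μ 1) * vol v := by
  have h0 := wedge1_lin_vol L (Fin.cons (eVec μ) v)
  rw [wedge1_cons] at h0
  have h1 : wedge1 (fun u => L (xc u)) (fun u => vol (Fin.cons (eVec μ) u)) v
      = wedge1 (fun u => L (xc u)) (volMu μ) v :=
    wedge1_congr_right _ (fun u => rfl) v
  rw [h1] at h0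
  have h2 : xc (eVec μ) = Pi.single μ 1 := rfl
  rw [h2] at h0
  linarith

lemma sum_cancel_of_antisymm {D : ℕ} (c g : Fin D → Fin D → ℝ)
    (hc : ∀ a b, c a b = c b a) (hg : ∀ a b, g a b = - g b a) :
    ∑ a : Fin D, ∑ b : Fin D, c a b * g a b = 0 := by
  have h : (∑ a : Fin D, ∑ b : Fin D, c a b * g a b)
      = - ∑ a : Fin D, ∑ b : Fin D, c a b * g a b := by
    nth_rewrite 1 [Finset.sum_comm]
    rw [← Finset.sum_neg_distrib]
    refine Finset.sum_congr rfl fun a _ => ?_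
    rw [← Finset.sum_neg_distrib]
    refine Finset.sum_congr rfl fun b _ => ?_
    rw [hc b a, hg b a]
    ring
  linarith

end Toolkit2
section OmegaSide
variable {n : ℕ}

lemma vol_xzero (u : Fin (n + 2) → E n) (j : Fin (n + 2)) (h : xc (u j) = 0) :
    vol u = 0 := by
  apply Matrix.det_eq_zero_of_column_eq_zero j
  intro i
  simp [vol, h]

lemma volMu_xzero (μ : Fin (n + 2)) (h : Fin (n + 1) → E n) (j : Fin (n + 1))
    (hj : xc (h j) = 0) : volMu μ h = 0 :=
  vol_xzero _ (Fin.succ j) (by simpa [Fin.cons_succ] using hj)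

lemma volMuNu_xzero (μ ν : Fin (n + 2)) (h : Fin n → E n) (j : Fin n)
    (hj : xc (h j) = 0) : volMuNu μ ν h = 0 :=
  vol_xzero _ (Fin.succ (Fin.succ j)) (by simpa [Fin.cons_succ] using hj)

lemma wedge1_zero_of_exists {k : ℕ} (α : E n → ℝ) (δ : (Fin k → E n) → ℝ) (b : E n)
    (hα : α b = 0) (hδ : ∀ h : Fin k → E n, (∃ j, h j = b) → δ h = 0)
    (g : Fin (k + 1) → E n) (hg : ∃ j, g j = b) : wedge1 α δ g = 0 := by
  obtain ⟨j0, hj0⟩ := hg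
  unfold wedge1
  refine Finset.sum_eq_zero fun i _ => ?_
  by_cases hij : i = j0
  · rw [hij, hj0, hα]; ring
  · obtain ⟨j', hj'⟩ := Fin.exists_succAbove_eq (Ne.symm hij)
    rw [hδ (g ∘ i.succAbove) ⟨j', by simp [hj', hj0]⟩]; ring

lemma Omega1_cons (ξ : E n) (hx : xc ξ = 0) (hP : ∀ μ ν, Pc ξ μ ν = 0)
    (v : Fin (n + 2) → E n) :
    Omega1 (Fin.cons ξ v) =
      ec ξ * vol v
      + ∑ μ : Fin (n + 2),
          (pc1 ξ μ * wedge1 phi1 (volMu μ) v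
            - phi1 ξ * wedge1 (fun u => pc1 u μ) (volMu μ) v
            + (pc2 ξ μ * wedge1 phi2 (volMu μ) v
            - phi2 ξ * wedge1 (fun u => pc2 u μ) (volMu μ) v))
      - ∑ l : Fin (n + 2), ∑ μ : Fin (n + 2), ∑ ν : Fin (n + 2),
          (1 / 2) * (ac ξ l *
            wedge1 (fun u => xc u l)
              (wedge1 (fun u => Pc u μ ν) (volMuNu μ ν)) v) := by
  unfold Omega1
  congr 1
  · congr 1
    · rw [wedge1_cons]
      rw [wedge1_congr_right ec
        (fun u => vol_xzero (Fin.cons ξ u) 0 (by simpa using hx)) v]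
      rw [wedge1_zero_right]
      ring
    · refine Finset.sum_congr rfl fun μ _ => ?_
      have key : ∀ (β φ : E n → ℝ),
          wedge1 β (wedge1 φ (volMu μ)) (Fin.cons ξ v)
            = β ξ * wedge1 φ (volMu μ) v - φ ξ * wedge1 β (volMu μ) v := by
        intro β φ
        rw [wedge1_cons]
        have h1 : ∀ u : Fin (n + 1) → E n,
            wedge1 φ (volMu μ) (Fin.cons ξ u) = φ ξ * volMu μ u := by
          intro u
          rw [wedge1_cons]
          rw [wedge1_congr_right φ
            (fun u' => volMu_xzero μ (Fin.cons ξ u') 0 (by simpa using hx)) u]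
          rw [wedge1_zero_right]
          ring
        rw [wedge1_congr_right β h1 v, wedge1_const_mul_right]
      rw [key (fun u => pc1 u μ) phi1, key (fun u => pc2 u μ) phi2]
  · refine Finset.sum_congr rfl fun l _ => Finset.sum_congr rfl fun μ _ =>
      Finset.sum_congr rfl fun ν _ => ?_
    congr 1
    have inner3 : ∀ h : Fin (n + 1) → E n, (∃ j, h j = ξ) →
        wedge1 (fun u => Pc u μ ν) (volMuNu μ ν) h = 0 := by
      refine fun h hh => wedge1_zero_of_exists _ _ ξ (hP μ ν) ?_ h hh
      rintro h' ⟨j, hj⟩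
      exact volMuNu_xzero μ ν h' j (by rw [hj, hx])
    rw [wedge1_cons]
    have h2 : ∀ u : Fin (n + 1) → E n,
        wedge1 (fun u' => xc u' l) (wedge1 (fun u' => Pc u' μ ν) (volMuNu μ ν))
          (Fin.cons ξ u) = 0 := by
      intro u
      refine wedge1_zero_of_exists _ _ ξ (by simp [hx]) inner3 _ ⟨0, rfl⟩
    rw [wedge1_congr_right _ h2 v, wedge1_zero_right]
    ring

end OmegaSide
section CLMs

abbrev T5 (n : ℕ) := Fin (n+2) → Fin (n+2) → ℝ
abbrev T4 (n : ℕ) := ((Fin (n+2) → ℝ) × (Fin (n+2) → ℝ)) × T5 n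
abbrev T3 (n : ℕ) := ℝ × T4 n
abbrev T2 (n : ℕ) := (Fin (n+2) → ℝ) × T3 n
abbrev T1 (n : ℕ) := (ℝ × ℝ) × T2 n

variable (n : ℕ)

noncomputable def cXc : E n →L[ℝ] (Fin (n+2) → ℝ) := ContinuousLinearMap.fst ℝ _ _
noncomputable def cT1 : E n →L[ℝ] T1 n := ContinuousLinearMap.snd ℝ _ _
noncomputable def cT2 : E n →L[ℝ] T2 n := (ContinuousLinearMap.snd ℝ (ℝ × ℝ) (T2 n)).comp (cT1 n)
noncomputable def cPhi1 : E n →L[ℝ] ℝ :=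
  (ContinuousLinearMap.fst ℝ ℝ ℝ).comp
    ((ContinuousLinearMap.fst ℝ (ℝ × ℝ) (T2 n)).comp (cT1 n))
noncomputable def cPhi2 : E n →L[ℝ] ℝ :=
  (ContinuousLinearMap.snd ℝ ℝ ℝ).comp
    ((ContinuousLinearMap.fst ℝ (ℝ × ℝ) (T2 n)).comp (cT1 n))
noncomputable def cAc : E n →L[ℝ] (Fin (n+2) → ℝ) :=
  (ContinuousLinearMap.fst ℝ (Fin (n+2) → ℝ) (T3 n)).comp (cT2 n)
noncomputable def cT3 : E n →L[ℝ] T3 n :=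
  (ContinuousLinearMap.snd ℝ (Fin (n+2) → ℝ) (T3 n)).comp (cT2 n)
noncomputable def cEc : E n →L[ℝ] ℝ := (ContinuousLinearMap.fst ℝ ℝ (T4 n)).comp (cT3 n)
noncomputable def cT4 : E n →L[ℝ] T4 n := (ContinuousLinearMap.snd ℝ ℝ (T4 n)).comp (cT3 n)
noncomputable def cP1 : E n →L[ℝ] (Fin (n+2) → ℝ) :=
  (ContinuousLinearMap.fst ℝ (Fin (n+2) → ℝ) (Fin (n+2) → ℝ)).comp
    ((ContinuousLinearMap.fst ℝ ((Fin (n+2) → ℝ) × (Fin (n+2) → ℝ)) (T5 n)).comp (cT4 n))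
noncomputable def cP2 : E n →L[ℝ] (Fin (n+2) → ℝ) :=
  (ContinuousLinearMap.snd ℝ (Fin (n+2) → ℝ) (Fin (n+2) → ℝ)).comp
    ((ContinuousLinearMap.fst ℝ ((Fin (n+2) → ℝ) × (Fin (n+2) → ℝ)) (T5 n)).comp (cT4 n))
noncomputable def cPP : E n →L[ℝ] T5 n :=
  (ContinuousLinearMap.snd ℝ ((Fin (n+2) → ℝ) × (Fin (n+2) → ℝ)) (T5 n)).comp (cT4 n)
noncomputable def cP1i (μ : Fin (n+2)) : E n →L[ℝ] ℝ := (ContinuousLinearMap.proj μ).comp (cP1 n)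
noncomputable def cP2i (μ : Fin (n+2)) : E n →L[ℝ] ℝ := (ContinuousLinearMap.proj μ).comp (cP2 n)
noncomputable def cAci (μ : Fin (n+2)) : E n →L[ℝ] ℝ := (ContinuousLinearMap.proj μ).comp (cAc n)
noncomputable def cPci (μ ν : Fin (n+2)) : E n →L[ℝ] ℝ :=
  (ContinuousLinearMap.proj ν).comp ((ContinuousLinearMap.proj μ).comp (cPP n))

variable {n}

@[simp] lemma cXc_apply (b : E n) : cXc n b = xc b := rfl
@[simp] lemma cPhi1_apply (b : E n) : cPhi1 n b = phi1 b := rfl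
@[simp] lemma cPhi2_apply (b : E n) : cPhi2 n b = phi2 b := rfl
@[simp] lemma cEc_apply (b : E n) : cEc n b = ec b := rfl
@[simp] lemma cP1i_apply (μ : Fin (n+2)) (b : E n) : cP1i n μ b = pc1 b μ := rfl
@[simp] lemma cP2i_apply (μ : Fin (n+2)) (b : E n) : cP2i n μ b = pc2 b μ := rfl
@[simp] lemma cAci_apply (μ : Fin (n+2)) (b : E n) : cAci n μ b = ac b μ := rfl
@[simp] lemma cPci_apply (μ ν : Fin (n+2)) (b : E n) : cPci n μ ν b = Pc b μ ν := rfl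

lemma hasF_xc (m : E n) : HasFDerivAt xc (cXc n) m := (cXc n).hasFDerivAt
lemma hasF_phi1 (m : E n) : HasFDerivAt phi1 (cPhi1 n) m := (cPhi1 n).hasFDerivAt
lemma hasF_phi2 (m : E n) : HasFDerivAt phi2 (cPhi2 n) m := (cPhi2 n).hasFDerivAt
lemma hasF_ec (m : E n) : HasFDerivAt ec (cEc n) m := (cEc n).hasFDerivAt
lemma hasF_p1 (μ : Fin (n+2)) (m : E n) :
    HasFDerivAt (fun y => pc1 y μ) (cP1i n μ) m := (cP1i n μ).hasFDerivAt
lemma hasF_p2 (μ : Fin (n+2)) (m : E n) :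
    HasFDerivAt (fun y => pc2 y μ) (cP2i n μ) m := (cP2i n μ).hasFDerivAt
lemma hasF_ac (μ : Fin (n+2)) (m : E n) :
    HasFDerivAt (fun y => ac y μ) (cAci n μ) m := (cAci n μ).hasFDerivAt
lemma hasF_Pc (μ ν : Fin (n+2)) (m : E n) :
    HasFDerivAt (fun y => Pc y μ ν) (cPci n μ ν) m := (cPci n μ ν).hasFDerivAt

end CLMs
section DF1
variable {n : ℕ}

lemma fderiv_F1 (ψ : (Fin (n + 2) → ℝ) → ℝ) (hψ : ContDiff ℝ (⊤ : ℕ∞) ψ) (m : E n)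
    (u : Fin (n + 1) → E n) (b : E n) :
    fderiv ℝ (fun y => F1 ψ y u) m b =
      fderiv ℝ ψ (xc m) (xc b)
          * ∑ μ : Fin (n + 2), (pc1 m μ * phi2 m - pc2 m μ * phi1 m) * volMu μ u
      + ψ (xc m) * ∑ μ : Fin (n + 2),
          (pc1 b μ * phi2 m + pc1 m μ * phi2 b
            - (pc2 b μ * phi1 m + pc2 m μ * phi1 b)) * volMu μ u
      - (1 / 2) * ∑ μ : Fin (n + 2), ∑ ν : Fin (n + 2),
          (Pc b μ ν * wedge1 (fun u' => fderiv ℝ ψ (xc m) (xc u')) (volMuNu μ ν) u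
            + Pc m μ ν * ∑ j : Fin (n + 1), (-1 : ℝ) ^ (j : ℕ)
                * fderiv ℝ (fderiv ℝ ψ) (xc m) (xc b) (xc (u j))
                * volMuNu μ ν (u ∘ j.succAbove)) := by
  have hψd : HasFDerivAt ψ (fderiv ℝ ψ (xc m)) (xc m) :=
    (hψ.differentiable (by simp) (xc m)).hasFDerivAt
  have hψ2 : HasFDerivAt (fderiv ℝ ψ) (fderiv ℝ (fderiv ℝ ψ) (xc m)) (xc m) :=
    (((hψ.fderiv_right (m := (⊤ : ℕ∞)) (by simp)).differentiable (by simp)) (xc m)).hasFDerivAt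
  -- derivative of y ↦ ψ (xc y)
  have hA : HasFDerivAt (fun y : E n => ψ (xc y))
      ((fderiv ℝ ψ (xc m)).comp (cXc n)) m := hψd.comp m (hasF_xc m)
  -- derivative of the coefficient sum
  have hC : HasFDerivAt
      (fun y : E n => ∑ μ : Fin (n + 2), (pc1 y μ * phi2 y - pc2 y μ * phi1 y) * volMu μ u)
      (∑ μ : Fin (n + 2), volMu μ u •
        ((pc1 m μ • cPhi2 n + phi2 m • cP1i n μ) - (pc2 m μ • cPhi1 n + phi1 m • cP2i n μ))) m := by
    refine HasFDerivAt.fun_sum fun μ _ => ?_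
    exact (((hasF_p1 μ m).mul (hasF_phi2 m)).sub ((hasF_p2 μ m).mul (hasF_phi1 m))).mul_const _
  -- derivative of the ψ-hessian wedge
  have hE : ∀ j : Fin (n + 1), HasFDerivAt
      (fun y : E n => fderiv ℝ ψ (xc y) (xc (u j)))
      ((ContinuousLinearMap.apply ℝ ℝ (xc (u j))).comp
        ((fderiv ℝ (fderiv ℝ ψ) (xc m)).comp (cXc n))) m := by
    intro j
    exact ((ContinuousLinearMap.apply ℝ ℝ (xc (u j))).hasFDerivAt).comp m
      (hψ2.comp m (hasF_xc m))
  have hw : ∀ μ ν : Fin (n + 2), HasFDerivAt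
      (fun y : E n => wedge1 (fun u' => fderiv ℝ ψ (xc y) (xc u')) (volMuNu μ ν) u)
      (∑ j : Fin (n + 1), volMuNu μ ν (u ∘ j.succAbove) • ((-1 : ℝ) ^ (j : ℕ) •
        ((ContinuousLinearMap.apply ℝ ℝ (xc (u j))).comp
          ((fderiv ℝ (fderiv ℝ ψ) (xc m)).comp (cXc n))))) m := by
    intro μ ν
    have : HasFDerivAt
        (fun y : E n => ∑ j : Fin (n + 1), (-1 : ℝ) ^ (j : ℕ)
          * fderiv ℝ ψ (xc y) (xc (u j)) * volMuNu μ ν (u ∘ j.succAbove))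
        (∑ j : Fin (n + 1), volMuNu μ ν (u ∘ j.succAbove) • ((-1 : ℝ) ^ (j : ℕ) •
          ((ContinuousLinearMap.apply ℝ ℝ (xc (u j))).comp
            ((fderiv ℝ (fderiv ℝ ψ) (xc m)).comp (cXc n))))) m :=
      HasFDerivAt.fun_sum fun j _ => (((hE j).const_mul _).mul_const _)
    exact this
  have hF : HasFDerivAt (fun y => F1 ψ y u) _ m :=
    (hA.mul hC).sub
      ((HasFDerivAt.fun_sum (u := Finset.univ) (fun μ (_ : μ ∈ Finset.univ) =>
        HasFDerivAt.fun_sum (u := Finset.univ) (fun ν (_ : ν ∈ Finset.univ) =>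
          (hasF_Pc μ ν m).mul (hw μ ν)))).const_mul (1/2 : ℝ))
  rw [hF.fderiv]
  simp only [ContinuousLinearMap.coe_comp', Function.comp_apply, ContinuousLinearMap.add_apply,
    ContinuousLinearMap.coe_sub', Pi.sub_apply, ContinuousLinearMap.smul_apply,
    ContinuousLinearMap.coe_smul', Pi.smul_apply, ContinuousLinearMap.sum_apply,
    ContinuousLinearMap.apply_apply, cXc_apply, cPhi1_apply, cPhi2_apply, cP1i_apply,
    cP2i_apply, cPci_apply, smul_eq_mul]
  have h1 : ∑ i : Fin (n+2), volMu i u *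
        (pc1 m i * phi2 b + phi2 m * pc1 b i - (pc2 m i * phi1 b + phi1 m * pc2 b i))
      = ∑ μ : Fin (n+2), (pc1 b μ * phi2 m + pc1 m μ * phi2 b
          - (pc2 b μ * phi1 m + pc2 m μ * phi1 b)) * volMu μ u :=
    Finset.sum_congr rfl fun μ _ => by ring
  have e1 : ∀ (μ ν : Fin (n+2)),
      (∑ j : Fin (n+1), volMuNu μ ν (u ∘ j.succAbove)
          * ((-1 : ℝ)^(j:ℕ) * fderiv ℝ (fderiv ℝ ψ) (xc m) (xc b) (xc (u j))))
        = ∑ j : Fin (n+1), (-1 : ℝ)^(j:ℕ)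
            * fderiv ℝ (fderiv ℝ ψ) (xc m) (xc b) (xc (u j))
            * volMuNu μ ν (u ∘ j.succAbove) :=
    fun μ ν => Finset.sum_congr rfl fun j _ => by ring
  congr 1
  · rw [h1]; ring
  · congr 1
    refine Finset.sum_congr rfl fun μ _ => Finset.sum_congr rfl fun ν _ => ?_
    rw [e1 μ ν]
    ring
end DF1
section EDF1
variable {n : ℕ}

lemma extDeriv_F1 (ψ : (Fin (n + 2) → ℝ) → ℝ) (hψ : ContDiff ℝ (⊤ : ℕ∞) ψ) (m : E n)
    (v : Fin (n + 2) → E n) :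
    extDeriv (F1 ψ) m v
      = ∑ μ : Fin (n + 2), (pc1 m μ * phi2 m - pc2 m μ * phi1 m) *
          wedge1 (fun u => fderiv ℝ ψ (xc m) (xc u)) (volMu μ) v
        + ψ (xc m) * ∑ μ : Fin (n + 2),
            wedge1 (fun u => pc1 u μ * phi2 m + pc1 m μ * phi2 u
              - (pc2 u μ * phi1 m + pc2 m μ * phi1 u)) (volMu μ) v
        - (1 / 2) * ∑ μ : Fin (n + 2), ∑ ν : Fin (n + 2),
            wedge1 (fun u => Pc u μ ν)
              (wedge1 (fun u => fderiv ℝ ψ (xc m) (xc u)) (volMuNu μ ν)) v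
        - (1 / 2) * ∑ μ : Fin (n + 2), ∑ ν : Fin (n + 2), Pc m μ ν *
            ∑ i : Fin (n + 2), (-1 : ℝ) ^ (i : ℕ) *
              ∑ j : Fin (n + 1), (-1 : ℝ) ^ (j : ℕ)
                * fderiv ℝ (fderiv ℝ ψ) (xc m) (xc (v i)) (xc ((v ∘ i.succAbove) j))
                * volMuNu μ ν ((v ∘ i.succAbove) ∘ j.succAbove) := by
  have G1 : ∑ μ : Fin (n + 2), (pc1 m μ * phi2 m - pc2 m μ * phi1 m) *
        wedge1 (fun u => fderiv ℝ ψ (xc m) (xc u)) (volMu μ) v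
      = ∑ i : Fin (n + 2), (-1 : ℝ) ^ (i : ℕ) *
          (fderiv ℝ ψ (xc m) (xc (v i)) * ∑ μ : Fin (n + 2),
            (pc1 m μ * phi2 m - pc2 m μ * phi1 m) * volMu μ (v ∘ i.succAbove)) := by
    unfold wedge1
    simp only [Finset.mul_sum]
    rw [Finset.sum_comm]
    exact Finset.sum_congr rfl fun i _ => Finset.sum_congr rfl fun μ _ => by ring
  have G2 : ψ (xc m) * ∑ μ : Fin (n + 2),
        wedge1 (fun u => pc1 u μ * phi2 m + pc1 m μ * phi2 u
          - (pc2 u μ * phi1 m + pc2 m μ * phi1 u)) (volMu μ) v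
      = ∑ i : Fin (n + 2), (-1 : ℝ) ^ (i : ℕ) *
          (ψ (xc m) * ∑ μ : Fin (n + 2),
            (pc1 (v i) μ * phi2 m + pc1 m μ * phi2 (v i)
              - (pc2 (v i) μ * phi1 m + pc2 m μ * phi1 (v i))) * volMu μ (v ∘ i.succAbove)) := by
    unfold wedge1
    simp only [Finset.mul_sum]
    rw [Finset.sum_comm]
    exact Finset.sum_congr rfl fun i _ => Finset.sum_congr rfl fun μ _ => by ring
  have swap3 : ∀ (f : Fin (n+2) → Fin (n+2) → Fin (n+2) → ℝ),
      (∑ μ : Fin (n+2), ∑ ν : Fin (n+2), ∑ i : Fin (n+2), f μ ν i)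
        = ∑ i : Fin (n+2), ∑ μ : Fin (n+2), ∑ ν : Fin (n+2), f μ ν i := by
    intro f
    rw [show (∑ μ : Fin (n+2), ∑ ν : Fin (n+2), ∑ i : Fin (n+2), f μ ν i)
        = ∑ μ : Fin (n+2), ∑ i : Fin (n+2), ∑ ν : Fin (n+2), f μ ν i from
      Finset.sum_congr rfl fun μ _ => Finset.sum_comm]
    exact Finset.sum_comm
  have G3 : (1 / 2 : ℝ) * ∑ μ : Fin (n + 2), ∑ ν : Fin (n + 2),
        wedge1 (fun u => Pc u μ ν)
          (wedge1 (fun u => fderiv ℝ ψ (xc m) (xc u)) (volMuNu μ ν)) v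
      = ∑ i : Fin (n + 2), (-1 : ℝ) ^ (i : ℕ) *
          ((1 / 2) * ∑ μ : Fin (n + 2), ∑ ν : Fin (n + 2), Pc (v i) μ ν *
            wedge1 (fun u => fderiv ℝ ψ (xc m) (xc u)) (volMuNu μ ν) (v ∘ i.succAbove)) := by
    have e : (∑ μ : Fin (n + 2), ∑ ν : Fin (n + 2),
          wedge1 (fun u => Pc u μ ν)
            (wedge1 (fun u => fderiv ℝ ψ (xc m) (xc u)) (volMuNu μ ν)) v)
        = ∑ μ : Fin (n+2), ∑ ν : Fin (n+2), ∑ i : Fin (n+2), (-1 : ℝ) ^ (i : ℕ)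
            * Pc (v i) μ ν *
            wedge1 (fun u => fderiv ℝ ψ (xc m) (xc u)) (volMuNu μ ν) (v ∘ i.succAbove) := rfl
    rw [e, swap3, Finset.mul_sum]
    refine Finset.sum_congr rfl fun i _ => ?_
    simp only [Finset.mul_sum]
    exact Finset.sum_congr rfl fun μ _ => Finset.sum_congr rfl fun ν _ => by ring
  have G4 : (1 / 2 : ℝ) * ∑ μ : Fin (n + 2), ∑ ν : Fin (n + 2), Pc m μ ν *
        ∑ i : Fin (n + 2), (-1 : ℝ) ^ (i : ℕ) *
          ∑ j : Fin (n + 1), (-1 : ℝ) ^ (j : ℕ)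
            * fderiv ℝ (fderiv ℝ ψ) (xc m) (xc (v i)) (xc ((v ∘ i.succAbove) j))
            * volMuNu μ ν ((v ∘ i.succAbove) ∘ j.succAbove)
      = ∑ i : Fin (n + 2), (-1 : ℝ) ^ (i : ℕ) *
          ((1 / 2) * ∑ μ : Fin (n + 2), ∑ ν : Fin (n + 2), Pc m μ ν *
            ∑ j : Fin (n + 1), (-1 : ℝ) ^ (j : ℕ)
              * fderiv ℝ (fderiv ℝ ψ) (xc m) (xc (v i)) (xc ((v ∘ i.succAbove) j))
              * volMuNu μ ν ((v ∘ i.succAbove) ∘ j.succAbove)) := by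
    simp only [Finset.mul_sum]
    rw [swap3]
    refine Finset.sum_congr rfl fun i _ => Finset.sum_congr rfl fun μ _ =>
      Finset.sum_congr rfl fun ν _ => Finset.sum_congr rfl fun j _ => by ring
  rw [G1, G2, G3, G4]
  unfold extDeriv
  rw [← Finset.sum_add_distrib, ← Finset.sum_sub_distrib, ← Finset.sum_sub_distrib]
  refine Finset.sum_congr rfl fun i _ => ?_
  rw [fderiv_F1 ψ hψ m (v ∘ i.succAbove) (v i)]
  rw [show (∑ μ : Fin (n + 2), ∑ ν : Fin (n + 2),
      (Pc (v i) μ ν * wedge1 (fun u' => fderiv ℝ ψ (xc m) (xc u')) (volMuNu μ ν) (v ∘ i.succAbove)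
        + Pc m μ ν * ∑ j : Fin (n + 1), (-1 : ℝ) ^ (j : ℕ)
            * fderiv ℝ (fderiv ℝ ψ) (xc m) (xc (v i)) (xc ((v ∘ i.succAbove) j))
            * volMuNu μ ν ((v ∘ i.succAbove) ∘ j.succAbove)))
    = (∑ μ : Fin (n + 2), ∑ ν : Fin (n + 2),
      Pc (v i) μ ν * wedge1 (fun u' => fderiv ℝ ψ (xc m) (xc u')) (volMuNu μ ν) (v ∘ i.succAbove))
      + ∑ μ : Fin (n + 2), ∑ ν : Fin (n + 2),
          Pc m μ ν * ∑ j : Fin (n + 1), (-1 : ℝ) ^ (j : ℕ)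
            * fderiv ℝ (fderiv ℝ ψ) (xc m) (xc (v i)) (xc ((v ∘ i.succAbove) j))
            * volMuNu μ ν ((v ∘ i.succAbove) ∘ j.succAbove) from by
      rw [← Finset.sum_add_distrib]
      exact Finset.sum_congr rfl fun μ _ => by rw [← Finset.sum_add_distrib]]
  ring
end EDF1
section Cancel
variable {n : ℕ}

lemma comm3 {A B C : Type*} [Fintype A] [Fintype B] [Fintype C] (f : A → B → C → ℝ) :
    (∑ a : A, ∑ b : B, ∑ c : C, f a b c) = ∑ b : B, ∑ c : C, ∑ a : A, f a b c := by
  rw [Finset.sum_comm]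
  exact Finset.sum_congr rfl fun b _ => Finset.sum_comm

lemma wedge1_F1coeff (μ : Fin (n + 2)) (m : E n) {k : ℕ} (δ : (Fin k → E n) → ℝ)
    (w : Fin (k + 1) → E n) :
    wedge1 (fun u => pc1 u μ * phi2 m + pc1 m μ * phi2 u
        - (pc2 u μ * phi1 m + pc2 m μ * phi1 u)) δ w
      = phi2 m * wedge1 (fun u => pc1 u μ) δ w + pc1 m μ * wedge1 phi2 δ w
        - (phi1 m * wedge1 (fun u => pc2 u μ) δ w + pc2 m μ * wedge1 phi1 δ w) := by
  unfold wedge1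
  simp only [Finset.mul_sum, ← Finset.sum_add_distrib, ← Finset.sum_sub_distrib]
  exact Finset.sum_congr rfl fun i _ => by ring

lemma wedge1_Lx_expand (L : (Fin (n + 2) → ℝ) →L[ℝ] ℝ) {k : ℕ}
    (δ : (Fin k → E n) → ℝ) (w : Fin (k + 1) → E n) :
    wedge1 (fun u => L (xc u)) δ w
      = ∑ l : Fin (n + 2), L (Pi.single l 1) * wedge1 (fun u => xc u l) δ w := by
  have hL : ∀ u : E n, L (xc u)
      = ∑ l : Fin (n + 2), L (Pi.single l 1) * xc u l := by
    intro u
    rw [show L (xc u) = (L : (Fin (n+2) → ℝ) →ₗ[ℝ] ℝ) (xc u) from rfl,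
      LinearMap.pi_apply_eq_sum_univ]
    refine Finset.sum_congr rfl fun l _ => ?_
    rw [smul_eq_mul, mul_comm]
    congr 1
    exact congrArg _ (funext fun j => by simp [Pi.single_apply, eq_comm])
  rw [wedge1_congr_left hL, wedge1_sum_left]

lemma hess_zero (ψ : (Fin (n + 2) → ℝ) → ℝ) (hψ : ContDiff ℝ (⊤ : ℕ∞) ψ) (m : E n)
    (μ ν : Fin (n + 2)) (v : Fin (n + 2) → E n) :
    ∑ i : Fin (n + 2), (-1 : ℝ) ^ (i : ℕ) *
      ∑ j : Fin (n + 1), (-1 : ℝ) ^ (j : ℕ)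
        * fderiv ℝ (fderiv ℝ ψ) (xc m) (xc (v i)) (xc ((v ∘ i.succAbove) j))
        * volMuNu μ ν ((v ∘ i.succAbove) ∘ j.succAbove) = 0 := by
  set H := fderiv ℝ (fderiv ℝ ψ) (xc m) with hHdef
  set ind : Fin (n + 2) → Fin (n + 2) → ℝ := fun l j => if l = j then 1 else 0 with hind
  have hbil : ∀ x y : Fin (n + 2) → ℝ, H x y
      = ∑ l : Fin (n + 2), ∑ l' : Fin (n + 2),
          H (ind l) (ind l') * (x l * y l') := by
    intro x y
    have h1 : H x = ∑ l : Fin (n + 2), x l • H (ind l) := by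
      exact LinearMap.pi_apply_eq_sum_univ
        (H : (Fin (n+2) → ℝ) →ₗ[ℝ] ((Fin (n+2) → ℝ) →L[ℝ] ℝ)) x
    rw [h1, ContinuousLinearMap.sum_apply]
    refine Finset.sum_congr rfl fun l _ => ?_
    rw [ContinuousLinearMap.smul_apply, smul_eq_mul]
    rw [show (H (ind l)) y = (H (ind l) : (Fin (n+2) → ℝ) →ₗ[ℝ] ℝ) y from rfl,
      LinearMap.pi_apply_eq_sum_univ, Finset.mul_sum]
    refine Finset.sum_congr rfl fun l' _ => ?_
    rw [smul_eq_mul]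
    rw [show ((H (ind l) : (Fin (n+2) → ℝ) →ₗ[ℝ] ℝ) (fun j => if l' = j then 1 else 0))
      = H (ind l) (ind l') from rfl]
    ring
  calc ∑ i : Fin (n + 2), (-1 : ℝ) ^ (i : ℕ) *
      ∑ j : Fin (n + 1), (-1 : ℝ) ^ (j : ℕ)
        * H (xc (v i)) (xc ((v ∘ i.succAbove) j))
        * volMuNu μ ν ((v ∘ i.succAbove) ∘ j.succAbove)
      = ∑ i : Fin (n + 2), ∑ j : Fin (n + 1), ∑ l : Fin (n + 2), ∑ l' : Fin (n + 2),
          H (ind l) (ind l') * ((-1 : ℝ) ^ (i : ℕ) * xc (v i) l *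
            ((-1 : ℝ) ^ (j : ℕ) * xc ((v ∘ i.succAbove) j) l'
              * volMuNu μ ν ((v ∘ i.succAbove) ∘ j.succAbove))) := by
        refine Finset.sum_congr rfl fun i _ => ?_
        rw [Finset.mul_sum]
        refine Finset.sum_congr rfl fun j _ => ?_
        rw [hbil]
        simp only [Finset.mul_sum, Finset.sum_mul]
        exact Finset.sum_congr rfl fun l _ => Finset.sum_congr rfl fun l' _ => by ring
    _ = ∑ l : Fin (n + 2), ∑ l' : Fin (n + 2), ∑ i : Fin (n + 2), ∑ j : Fin (n + 1),
          H (ind l) (ind l') * ((-1 : ℝ) ^ (i : ℕ) * xc (v i) l *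
            ((-1 : ℝ) ^ (j : ℕ) * xc ((v ∘ i.succAbove) j) l'
              * volMuNu μ ν ((v ∘ i.succAbove) ∘ j.succAbove))) := by
        rw [show (∑ i : Fin (n + 2), ∑ j : Fin (n + 1), ∑ l : Fin (n + 2), ∑ l' : Fin (n + 2),
            H (ind l) (ind l') * ((-1 : ℝ) ^ (i : ℕ) * xc (v i) l *
              ((-1 : ℝ) ^ (j : ℕ) * xc ((v ∘ i.succAbove) j) l'
                * volMuNu μ ν ((v ∘ i.succAbove) ∘ j.succAbove))))
          = ∑ i : Fin (n + 2), ∑ l : Fin (n + 2), ∑ l' : Fin (n + 2), ∑ j : Fin (n + 1),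
            H (ind l) (ind l') * ((-1 : ℝ) ^ (i : ℕ) * xc (v i) l *
              ((-1 : ℝ) ^ (j : ℕ) * xc ((v ∘ i.succAbove) j) l'
                * volMuNu μ ν ((v ∘ i.succAbove) ∘ j.succAbove))) from
          Finset.sum_congr rfl fun i _ => comm3 _]
        exact comm3 _
    _ = ∑ l : Fin (n + 2), ∑ l' : Fin (n + 2),
          H (ind l) (ind l') * wedge1 (fun u => xc u l)
            (wedge1 (fun u => xc u l') (volMuNu μ ν)) v := by
        refine Finset.sum_congr rfl fun l _ => Finset.sum_congr rfl fun l' _ => ?_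
        unfold wedge1
        simp only [Finset.mul_sum]
    _ = 0 := by
        have hf : ∀ y, HasFDerivAt ψ (fderiv ℝ ψ y) y := fun y =>
          (hψ.differentiable (by simp) y).hasFDerivAt
        have hx : HasFDerivAt (fderiv ℝ ψ) H (xc m) :=
          (((hψ.fderiv_right (m := (⊤ : ℕ∞)) (by simp)).differentiable (by simp)) (xc m)).hasFDerivAt
        exact sum_cancel_of_antisymm _ _
          (fun a b => second_derivative_symmetric hf hx (ind a) (ind b))
          (fun a b => wedge1_swap (fun u => xc u a) (fun u => xc u b) (volMuNu μ ν) v)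

end Cancel
section Part1
variable {n : ℕ}

lemma part1 (ψ : (Fin (n + 2) → ℝ) → ℝ) (hψ : ContDiff ℝ (⊤ : ℕ∞) ψ) (m : E n)
    (v : Fin (n + 2) → E n) :
    extDeriv (F1 ψ) m v + Omega1 (Fin.cons (xi1 ψ m) v) = 0 := by
  rw [extDeriv_F1 ψ hψ m v, Omega1_cons (xi1 ψ m) rfl (fun μ ν => rfl) v]
  have c1 : ∀ μ, pc1 (xi1 ψ m) μ = ψ (xc m) * pc2 m μ := fun μ => rfl
  have c2 : ∀ μ, pc2 (xi1 ψ m) μ = -(ψ (xc m) * pc1 m μ) := fun μ => rfl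
  have c3 : phi1 (xi1 ψ m) = ψ (xc m) * phi2 m := rfl
  have c4 : phi2 (xi1 ψ m) = -(ψ (xc m) * phi1 m) := rfl
  have c5 : ec (xi1 ψ m) = -(∑ μ : Fin (n+2),
      (pc1 m μ * phi2 m - pc2 m μ * phi1 m) * fderiv ℝ ψ (xc m) (Pi.single μ 1)) := rfl
  have c6 : ∀ l, ac (xi1 ψ m) l = fderiv ℝ ψ (xc m) (Pi.single l 1) := fun l => rfl
  simp only [c1, c2, c3, c4, c5, c6]
  have e1 : ∀ μ : Fin (n+2), wedge1 (fun u => fderiv ℝ ψ (xc m) (xc u)) (volMu μ) v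
      = fderiv ℝ ψ (xc m) (Pi.single μ 1) * vol v := fun μ =>
    wedge1_lin_volMu ((fderiv ℝ ψ (xc m)) : (Fin (n+2) → ℝ) →ₗ[ℝ] ℝ) μ v
  have e3 : ∀ μ ν : Fin (n+2), wedge1 (fun u => Pc u μ ν)
        (wedge1 (fun u => fderiv ℝ ψ (xc m) (xc u)) (volMuNu μ ν)) v
      = - ∑ l : Fin (n+2), fderiv ℝ ψ (xc m) (Pi.single l 1) *
          wedge1 (fun u => xc u l) (wedge1 (fun u => Pc u μ ν) (volMuNu μ ν)) v := by
    intro μ ν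
    rw [wedge1_swap (fun u => Pc u μ ν) (fun u => fderiv ℝ ψ (xc m) (xc u)) (volMuNu μ ν) v]
    rw [wedge1_Lx_expand (fderiv ℝ ψ (xc m))]
  have e4 : ∀ μ ν : Fin (n+2),
      (∑ i : Fin (n + 2), (-1 : ℝ) ^ (i : ℕ) *
        ∑ j : Fin (n + 1), (-1 : ℝ) ^ (j : ℕ)
          * fderiv ℝ (fderiv ℝ ψ) (xc m) (xc (v i)) (xc ((v ∘ i.succAbove) j))
          * volMuNu μ ν ((v ∘ i.succAbove) ∘ j.succAbove)) = 0 :=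
    fun μ ν => hess_zero ψ hψ m μ ν v
  simp only [e1, e3, e4, mul_zero, Finset.sum_const_zero]
  have h11 : (∑ μ : Fin (n+2), (pc1 m μ * phi2 m - pc2 m μ * phi1 m) *
        (fderiv ℝ ψ (xc m) (Pi.single μ 1) * vol v))
      + (-∑ μ : Fin (n+2), (pc1 m μ * phi2 m - pc2 m μ * phi1 m) *
          fderiv ℝ ψ (xc m) (Pi.single μ 1)) * vol v = 0 := by
    rw [neg_mul, Finset.sum_mul]
    rw [show (∑ μ : Fin (n+2), (pc1 m μ * phi2 m - pc2 m μ * phi1 m) *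
        (fderiv ℝ ψ (xc m) (Pi.single μ 1) * vol v))
      = ∑ μ : Fin (n+2), (pc1 m μ * phi2 m - pc2 m μ * phi1 m) *
          fderiv ℝ ψ (xc m) (Pi.single μ 1) * vol v from
      Finset.sum_congr rfl fun μ _ => by ring]
    ring
  have h22 : ψ (xc m) * (∑ μ : Fin (n+2),
        wedge1 (fun u => pc1 u μ * phi2 m + pc1 m μ * phi2 u
          - (pc2 u μ * phi1 m + pc2 m μ * phi1 u)) (volMu μ) v)
      + ∑ μ : Fin (n+2),
          (ψ (xc m) * pc2 m μ * wedge1 phi1 (volMu μ) v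
            - ψ (xc m) * phi2 m * wedge1 (fun u => pc1 u μ) (volMu μ) v
            + (-(ψ (xc m) * pc1 m μ) * wedge1 phi2 (volMu μ) v
              - -(ψ (xc m) * phi1 m) * wedge1 (fun u => pc2 u μ) (volMu μ) v)) = 0 := by
    rw [Finset.mul_sum, ← Finset.sum_add_distrib]
    refine Finset.sum_eq_zero fun μ _ => ?_
    rw [wedge1_F1coeff μ m (volMu μ) v]
    ring
  have h33 : (1/2 : ℝ) * (∑ μ : Fin (n+2), ∑ ν : Fin (n+2),
        -∑ l : Fin (n+2), fderiv ℝ ψ (xc m) (Pi.single l 1) *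
          wedge1 (fun u => xc u l) (wedge1 (fun u => Pc u μ ν) (volMuNu μ ν)) v)
      + ∑ l : Fin (n+2), ∑ μ : Fin (n+2), ∑ ν : Fin (n+2),
          (1/2 : ℝ) * (fderiv ℝ ψ (xc m) (Pi.single l 1) *
            wedge1 (fun u => xc u l) (wedge1 (fun u => Pc u μ ν) (volMuNu μ ν)) v) = 0 := by
    rw [comm3 (fun l μ ν => (1/2 : ℝ) * (fderiv ℝ ψ (xc m) (Pi.single l 1) *
      wedge1 (fun u => xc u l) (wedge1 (fun u => Pc u μ ν) (volMuNu μ ν)) v))]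
    rw [Finset.mul_sum, ← Finset.sum_add_distrib]
    refine Finset.sum_eq_zero fun μ _ => ?_
    rw [Finset.mul_sum, ← Finset.sum_add_distrib]
    refine Finset.sum_eq_zero fun ν _ => ?_
    rw [mul_neg, Finset.mul_sum]
    exact neg_add_cancel _
  linear_combination h11 + h22 - h33
end Part1
section Part2
variable {n : ℕ}

lemma part2 (η : Fin (n + 2) → Fin (n + 2) → ℝ) (V : ℝ → ℝ) (hV : ContDiff ℝ (⊤ : ℕ∞) V)
    (ψ : (Fin (n + 2) → ℝ) → ℝ) (hψ : ContDiff ℝ (⊤ : ℕ∞) ψ) (m : E n) :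
    fderiv ℝ (H1 η V) m (xi1 ψ m) = 0 := by
  have h2 : HasFDerivAt (fun y : E n => (1/2 : ℝ) * ∑ μ : Fin (n+2), ∑ ν : Fin (n+2),
      η μ ν * (pc1 y μ * pc1 y ν + pc2 y μ * pc2 y ν)) _ m :=
    HasFDerivAt.const_mul (HasFDerivAt.fun_sum fun μ _ => HasFDerivAt.fun_sum fun ν _ =>
      HasFDerivAt.const_mul
        (((hasF_p1 μ m).mul (hasF_p1 ν m)).add ((hasF_p2 μ m).mul (hasF_p2 ν m)))
        (η μ ν)) (1/2 : ℝ)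
  have h3 : HasFDerivAt (fun y : E n => ∑ μ : Fin (n+2),
      (pc1 y μ * phi2 y - pc2 y μ * phi1 y) * ac y μ) _ m :=
    HasFDerivAt.fun_sum fun μ _ =>
      (((hasF_p1 μ m).fun_mul (hasF_phi2 m)).fun_sub ((hasF_p2 μ m).fun_mul (hasF_phi1 m))).fun_mul
        (hasF_ac μ m)
  have h4 : HasFDerivAt (fun y : E n => (1/4 : ℝ) * ∑ μ : Fin (n+2), ∑ ν : Fin (n+2),
      ∑ l : Fin (n+2), ∑ σ : Fin (n+2), η μ l * η ν σ * Pc y μ ν * Pc y l σ) _ m :=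
    HasFDerivAt.const_mul (HasFDerivAt.fun_sum fun μ _ => HasFDerivAt.fun_sum fun ν _ =>
      HasFDerivAt.fun_sum fun l _ => HasFDerivAt.fun_sum fun σ _ =>
        ((hasF_Pc μ ν m).const_mul (η μ l * η ν σ)).mul (hasF_Pc l σ m)) (1/4 : ℝ)
  have hin := (((hasF_phi1 m).fun_mul (hasF_phi1 m)).fun_add
    ((hasF_phi2 m).fun_mul (hasF_phi2 m))).mul_const ((1:ℝ)/2)
  rw [show (fun y : E n => (phi1 y * phi1 y + phi2 y * phi2 y) * (1/2))
    = fun y => (phi1 y ^ 2 + phi2 y ^ 2) / 2 from funext fun y => by ring] at hin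
  have h5 : HasFDerivAt (fun y : E n => V ((phi1 y ^ 2 + phi2 y ^ 2) / 2)) _ m :=
    HasFDerivAt.comp m
      ((hV.differentiable (by simp) ((phi1 m ^ 2 + phi2 m ^ 2) / 2)).hasFDerivAt) hin
  have hH : HasFDerivAt (H1 η V) _ m := ((((hasF_ec m).add h2).add h3).sub h4).sub h5
  rw [hH.fderiv]
  simp only [ContinuousLinearMap.coe_comp', Function.comp_apply, ContinuousLinearMap.add_apply,
    ContinuousLinearMap.coe_sub', Pi.sub_apply, ContinuousLinearMap.smul_apply,
    ContinuousLinearMap.coe_smul', Pi.smul_apply, ContinuousLinearMap.sum_apply,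
    cXc_apply, cPhi1_apply, cPhi2_apply, cP1i_apply, cP2i_apply, cPci_apply, cAci_apply,
    cEc_apply, smul_eq_mul]
  have c1 : ∀ μ, pc1 (xi1 ψ m) μ = ψ (xc m) * pc2 m μ := fun μ => rfl
  have c2 : ∀ μ, pc2 (xi1 ψ m) μ = -(ψ (xc m) * pc1 m μ) := fun μ => rfl
  have c3 : phi1 (xi1 ψ m) = ψ (xc m) * phi2 m := rfl
  have c4 : phi2 (xi1 ψ m) = -(ψ (xc m) * phi1 m) := rfl
  have c5 : ec (xi1 ψ m) = -(∑ μ : Fin (n+2),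
      (pc1 m μ * phi2 m - pc2 m μ * phi1 m) * fderiv ℝ ψ (xc m) (Pi.single μ 1)) := rfl
  have c6 : ∀ l, ac (xi1 ψ m) l = fderiv ℝ ψ (xc m) (Pi.single l 1) := fun l => rfl
  have cP : ∀ μ ν, Pc (xi1 ψ m) μ ν = 0 := fun μ ν => rfl
  simp only [c1, c2, c3, c4, c5, c6, cP]
  have t2 : ∑ x : Fin (n+2), ∑ x1 : Fin (n+2),
      η x x1 * (pc1 m x * (ψ (xc m) * pc2 m x1) + pc1 m x1 * (ψ (xc m) * pc2 m x)
        + (pc2 m x * -(ψ (xc m) * pc1 m x1) + pc2 m x1 * -(ψ (xc m) * pc1 m x))) = 0 :=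
    Finset.sum_eq_zero fun x _ => Finset.sum_eq_zero fun x1 _ => by ring
  have t4 : ∑ x : Fin (n+2), ∑ x1 : Fin (n+2), ∑ x2 : Fin (n+2), ∑ x3 : Fin (n+2),
      (η x x2 * η x1 x3 * Pc m x x1 * (0:ℝ) + Pc m x2 x3 * (η x x2 * η x1 x3 * 0)) = 0 :=
    Finset.sum_eq_zero fun x _ => Finset.sum_eq_zero fun x1 _ =>
      Finset.sum_eq_zero fun x2 _ => Finset.sum_eq_zero fun x3 _ => by ring
  have t3 : ∑ x : Fin (n+2),
      ((pc1 m x * phi2 m - pc2 m x * phi1 m) * fderiv ℝ ψ (xc m) (Pi.single x 1)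
        + ac m x * (pc1 m x * -(ψ (xc m) * phi1 m) + phi2 m * (ψ (xc m) * pc2 m x)
          - (pc2 m x * (ψ (xc m) * phi2 m) + phi1 m * -(ψ (xc m) * pc1 m x))))
      = ∑ x : Fin (n+2),
          (pc1 m x * phi2 m - pc2 m x * phi1 m) * fderiv ℝ ψ (xc m) (Pi.single x 1) :=
    Finset.sum_congr rfl fun x _ => by ring
  have tV : (1/2 : ℝ) * (phi1 m * (ψ (xc m) * phi2 m) + phi1 m * (ψ (xc m) * phi2 m)
      + (phi2 m * -(ψ (xc m) * phi1 m) + phi2 m * -(ψ (xc m) * phi1 m))) = 0 := by ring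
  rw [t2, t4, t3, tV, map_zero]
  ring
end Part2
/-- in the gauged complex scalar field model, for every smooth smearing
function `ψ` of the space-time variables, the `(n-1)`-form `F₁` satisfies
`dF₁ = -ξ₁ ⌟ Ω₁` and `dH₁(ξ₁) = 0`; hence `F₁` is a dynamical algebraic observable
`(n-1)`-form. -/
theorem stmt17 (n : ℕ) (η : Fin (n + 2) → Fin (n + 2) → ℝ)
    (hη : ∀ μ ν, η μ ν = η ν μ) (V : ℝ → ℝ) (hV : ContDiff ℝ (⊤ : ℕ∞) V)
    (ψ : (Fin (n + 2) → ℝ) → ℝ) (hψ : ContDiff ℝ (⊤ : ℕ∞) ψ) :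
    (∀ (m : E n) (v : Fin (n + 2) → E n),
      extDeriv (F1 ψ) m v + Omega1 (Fin.cons (xi1 ψ m) v) = 0)
    ∧ ∀ m : E n, fderiv ℝ (H1 η V) m (xi1 ψ m) = 0 :=
  ⟨fun m v => part1 ψ hψ m v, fun m => part2 η V hV ψ hψ m⟩

end Stmt17
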